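/- For every real x with 0 ≤ x < π/2, the real part of e^{2ix} · ∫₀¹ √( (s−1)(s − e^{−2ix}) ) ds is nonzero, where the integral is over real s ∈ (0,1) and √ denotes the principal branch of the complex square root applied to the product (s−1)(s − e^{−2ix}). -/

import Mathlib

/-!
For `u = √w` one has the identity `2 Re(ζu) Re u = Re ζ ‖w‖ + Re(ζw)`, and the principal root
has `Re u ≥ 0`; so `Re(ζ√w) > 0` as soon as the right-hand side is positive. With
`ζ = e^{2ix}` and `w = (s-1)(s-ζ⁻¹)` we get `ζw = (1-s)(1-sζ)`, and the right-hand side is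
`(1-s)(Re ζ ‖1-sζ‖ + 1 - s Re ζ)`, which is at least `(1-s)(1 + Re ζ) > 0` by `‖1-sζ‖ ≤ 1+s`
(when `Re ζ < 0`). Hence the integrand of `e^{2ix} ∫₀¹ √w ds` has positive real part on `(0,1)`.
-/

open Complex MeasureTheory Set

namespace Complex

lemma norm_cpow_inv_two_sq (w : ℂ) : ‖w ^ (2⁻¹ : ℂ)‖ ^ 2 = ‖w‖ := by
  rw [← norm_pow, cpow_ofNat_inv_pow]

lemma two_mul_re_mul_mul_re (ζ u : ℂ) :
    2 * (ζ * u).re * u.re = ζ.re * ‖u‖ ^ 2 + (ζ * u ^ 2).re := by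
  rw [← normSq_eq_norm_sq, normSq_apply]
  simp only [mul_re, sq, mul_im]
  ring

lemma re_mul_cpow_inv_two_pos {ζ w : ℂ} (h : 0 < ζ.re * ‖w‖ + (ζ * w).re) :
    0 < (ζ * w ^ (2⁻¹ : ℂ)).re := by
  have hroot := two_mul_re_mul_mul_re ζ (w ^ (2⁻¹ : ℂ))
  rw [norm_cpow_inv_two_sq, cpow_ofNat_inv_pow] at hroot
  have hre : 0 ≤ (w ^ (2⁻¹ : ℂ)).re := by
    rw [cpow_inv_two_re]
    exact Real.sqrt_nonneg _
  nlinarith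

lemma re_mul_norm_one_sub_add_re_pos {ζ : ℂ} (hζ : ‖ζ‖ = 1) (hζre : -1 < ζ.re)
    {s : ℝ} (hs0 : 0 ≤ s) (hs1 : s < 1) :
    0 < ζ.re * ‖1 - s * ζ‖ + (1 - s * ζ).re := by
  have hre : (1 - s * ζ).re = 1 - s * ζ.re := by simp
  have hnorm : ‖1 - s * ζ‖ ≤ 1 + s := by
    calc ‖1 - s * ζ‖ ≤ ‖(1 : ℂ)‖ + ‖(s : ℂ) * ζ‖ := norm_sub_le _ _
      _ = 1 + s := by rw [norm_one, norm_mul, hζ, norm_real, Real.norm_of_nonneg hs0, mul_one]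
  have hζre' : ζ.re ≤ 1 := hζ ▸ re_le_norm ζ
  rw [hre]
  rcases le_or_gt 0 ζ.re with hc | hc
  · nlinarith [norm_nonneg (1 - s * ζ)]
  · nlinarith

lemma re_mul_cpow_inv_two_mul_sub_pos {ζ : ℂ} (hζ : ‖ζ‖ = 1) (hζre : -1 < ζ.re)
    {s : ℝ} (hs0 : 0 ≤ s) (hs1 : s < 1) :
    0 < (ζ * (((s : ℂ) - 1) * ((s : ℂ) - ζ⁻¹)) ^ (2⁻¹ : ℂ)).re := by
  have hζ0 : ζ ≠ 0 := norm_ne_zero_iff.mp (by rw [hζ]; exact one_ne_zero)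
  have hfactor : ζ * (((s : ℂ) - 1) * ((s : ℂ) - ζ⁻¹)) = ((1 - s : ℝ) : ℂ) * (1 - s * ζ) := by
    push_cast
    field_simp
    ring
  have hnorm : ‖((s : ℂ) - 1) * ((s : ℂ) - ζ⁻¹)‖ = (1 - s) * ‖1 - s * ζ‖ := by
    calc ‖((s : ℂ) - 1) * ((s : ℂ) - ζ⁻¹)‖ = ‖ζ * (((s : ℂ) - 1) * ((s : ℂ) - ζ⁻¹))‖ := by
          rw [norm_mul ζ, hζ, one_mul]
      _ = (1 - s) * ‖1 - s * ζ‖ := by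
          rw [hfactor, norm_mul, norm_real, Real.norm_of_nonneg (by linarith)]
  apply re_mul_cpow_inv_two_pos
  rw [hnorm, hfactor, re_ofReal_mul]
  have := re_mul_norm_one_sub_add_re_pos hζ hζre hs0 hs1
  nlinarith

end Complex

lemma Continuous.intervalIntegrable_cpow_inv_two {f : ℝ → ℂ} (hf : Continuous f) (a b : ℝ) :
    IntervalIntegrable (fun s => f s ^ (2⁻¹ : ℂ)) volume a b := by
  have hdom : Continuous fun s => 1 + ‖f s‖ := continuous_const.add hf.norm
  refine (hdom.intervalIntegrable a b).mono_fun' (hf.measurable.pow_const _).aestronglyMeasurable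
    (Filter.Eventually.of_forall fun s => ?_)
  show ‖f s ^ (2⁻¹ : ℂ)‖ ≤ 1 + ‖f s‖
  have := norm_cpow_inv_two_sq (f s)
  nlinarith [norm_nonneg (f s ^ (2⁻¹ : ℂ))]

lemma intervalIntegral_re_pos_of_pos_on {f : ℝ → ℂ} {a b : ℝ}
    (hf : IntervalIntegrable f volume a b) (hpos : ∀ x ∈ Ioo a b, 0 < (f x).re) (hab : a < b) :
    0 < (∫ x in a..b, f x).re := by
  rw [← RCLike.re_to_complex, ← intervalIntegral.intervalIntegral_re hf]
  exact intervalIntegral.intervalIntegral_pos_of_pos_on ⟨hf.1.re, hf.2.re⟩ hpos hab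

theorem stmt_13 (x : ℝ) (hx0 : 0 ≤ x) (hx1 : x < Real.pi / 2) :
    (Complex.exp (2 * (x : ℂ) * Complex.I) *
      ∫ s in (0 : ℝ)..1,
        (((s : ℂ) - 1) * ((s : ℂ) - Complex.exp (-(2 * (x : ℂ) * Complex.I)))) ^ (1/2 : ℂ)).re
    ≠ 0 := by
  have hangle : 2 * (x : ℂ) * I = ((2 * x : ℝ) : ℂ) * I := by push_cast; ring
  set ζ := Complex.exp (2 * (x : ℂ) * Complex.I) with hζdef
  have hζ : ‖ζ‖ = 1 := by rw [hζdef, hangle]; exact norm_exp_ofReal_mul_I _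
  have hζre : -1 < ζ.re := by
    rw [hζdef, hangle, exp_ofReal_mul_I_re, ← Real.cos_pi]
    exact Real.cos_lt_cos_of_nonneg_of_le_pi (by linarith) le_rfl (by linarith)
  rw [Complex.exp_neg, ← hζdef, one_div, ← intervalIntegral.integral_const_mul]
  refine (intervalIntegral_re_pos_of_pos_on
    ((Continuous.intervalIntegrable_cpow_inv_two (by fun_prop) 0 1).const_mul ζ)
    (fun s hs => re_mul_cpow_inv_two_mul_sub_pos hζ hζre hs.1.le hs.2) zero_lt_one).ne'
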